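/- arXiv:2310.00353 — 2 statements merged into one kernel-verified Lean document; each statement's English description precedes it below -/
import Mathlib

section
/- Let (h, v1, v2, P11, P12, P22) be a smooth solution of the one-dimensional homogeneous shear shallow water system, let s = log((P11 P22 − P12^2)/h^2), and define the entropy η = −h s and entropy flux q^x = −h v1 s. Then the entropy equality ∂t η + ∂x q^x = 0 holds. -/
variable {f g F : ℝ × ℝ → ℝ} {p w : ℝ × ℝ} {c : ℝ}

theorem fdw_add (hf : DifferentiableAt ℝ f p) (hg : DifferentiableAt ℝ g p) :
    fderiv ℝ (fun q => f q + g q) p w = fderiv ℝ f p w + fderiv ℝ g p w := by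
  rw [fderiv_fun_add hf hg]; rfl

theorem fdw_sub (hf : DifferentiableAt ℝ f p) (hg : DifferentiableAt ℝ g p) :
    fderiv ℝ (fun q => f q - g q) p w = fderiv ℝ f p w - fderiv ℝ g p w := by
  rw [fderiv_fun_sub hf hg]; rfl

theorem fdw_mul (hf : DifferentiableAt ℝ f p) (hg : DifferentiableAt ℝ g p) :
    fderiv ℝ (fun q => f q * g q) p w
      = fderiv ℝ f p w * g p + f p * fderiv ℝ g p w := by
  rw [fderiv_fun_mul hf hg]
  simp [ContinuousLinearMap.add_apply, ContinuousLinearMap.smul_apply, smul_eq_mul]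
  ring

theorem fdw_neg : fderiv ℝ (fun q => -f q) p w = -fderiv ℝ f p w := by
  rw [fderiv_fun_neg]; rfl

theorem fdw_const_mul (hf : DifferentiableAt ℝ f p) :
    fderiv ℝ (fun q => c * f q) p w = c * fderiv ℝ f p w := by
  rw [fderiv_const_mul hf]; simp

theorem fdw_div_const (hf : DifferentiableAt ℝ f p) :
    fderiv ℝ (fun q => f q / c) p w = fderiv ℝ f p w / c := by
  simp only [div_eq_mul_inv]
  rw [fderiv_mul_const hf]; simp; ring

theorem fdw_pow2 (hf : DifferentiableAt ℝ f p) :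
    fderiv ℝ (fun q => f q ^ 2) p w = 2 * f p * fderiv ℝ f p w := by
  have h2 : (fun q => f q ^ 2) = fun q => f q * f q := by ext q; ring
  rw [h2, fdw_mul hf hf]; ring

theorem fdw_inv (hg : DifferentiableAt ℝ g p) (h0 : g p ≠ 0) :
    fderiv ℝ (fun q => (g q)⁻¹) p w = -fderiv ℝ g p w / g p ^ 2 := by
  have h : HasFDerivAt (fun q => (g q)⁻¹) (-(g p ^ 2)⁻¹ • fderiv ℝ g p) p :=
    (hasDerivAt_inv h0).comp_hasFDerivAt p hg.hasFDerivAt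
  rw [h.fderiv]
  simp [ContinuousLinearMap.smul_apply, smul_eq_mul]
  ring

theorem fdw_div (hf : DifferentiableAt ℝ f p) (hg : DifferentiableAt ℝ g p)
    (h0 : g p ≠ 0) :
    fderiv ℝ (fun q => f q / g q) p w
      = (fderiv ℝ f p w * g p - f p * fderiv ℝ g p w) / g p ^ 2 := by
  have h2 : (fun q => f q / g q) = fun q => f q * (g q)⁻¹ := by
    ext q; rw [div_eq_mul_inv]
  rw [h2, fdw_mul (g := fun q => (g q)⁻¹) hf (hg.inv h0), fdw_inv hg h0]
  field_simp
  ring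

theorem fdw_log (hF : DifferentiableAt ℝ F p) (h0 : F p ≠ 0) :
    fderiv ℝ (fun q => Real.log (F q)) p w = fderiv ℝ F p w / F p := by
  rw [fderiv.log hF h0]
  simp [ContinuousLinearMap.smul_apply, smul_eq_mul, div_eq_inv_mul]



/-- Partial derivative in the first (time) variable. -/
noncomputable def pdt (f : ℝ × ℝ → ℝ) (p : ℝ × ℝ) : ℝ := fderiv ℝ f p (1, 0)

/-- Partial derivative in the second (space) variable. -/
noncomputable def pdx (f : ℝ × ℝ → ℝ) (p : ℝ × ℝ) : ℝ := fderiv ℝ f p (0, 1)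

/-- For a smooth solution of the 1-D homogeneous shear shallow water system, the entropy
pair `η = -h s`, `qx = -h v1 s` with `s = log((P11 P22 - P12^2)/h^2)` satisfies
the entropy equality `∂t η + ∂x qx = 0`. -/
theorem ssw_entropy_equality
    (Ω : Set (ℝ × ℝ)) (hΩ : IsOpen Ω) (g : ℝ) (hg : 0 < g)
    (h v1 v2 P11 P12 P22 : ℝ × ℝ → ℝ)
    (hsm0 : ContDiffOn ℝ 1 h Ω) (hsm1 : ContDiffOn ℝ 1 v1 Ω)
    (hsm2 : ContDiffOn ℝ 1 v2 Ω) (hsm3 : ContDiffOn ℝ 1 P11 Ω)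
    (hsm4 : ContDiffOn ℝ 1 P12 Ω) (hsm5 : ContDiffOn ℝ 1 P22 Ω)
    (hpos : ∀ p ∈ Ω, 0 < h p)
    (hP11pos : ∀ p ∈ Ω, 0 < P11 p)
    (hdet : ∀ p ∈ Ω, 0 < P11 p * P22 p - P12 p ^ 2)
    (eq1 : ∀ p ∈ Ω, pdt h p + pdx (fun q => h q * v1 q) p = 0)
    (eq2 : ∀ p ∈ Ω, pdt (fun q => h q * v1 q) p
      + pdx (fun q => h q * (v1 q ^ 2 + P11 q)) p + g * h p * pdx h p = 0)
    (eq3 : ∀ p ∈ Ω, pdt (fun q => h q * v2 q) p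
      + pdx (fun q => h q * (v1 q * v2 q + P12 q)) p = 0)
    (eq4 : ∀ p ∈ Ω, pdt (fun q => h q / 2 * (v1 q ^ 2 + P11 q)) p
      + pdx (fun q => h q / 2 * (v1 q * (v1 q ^ 2 + 3 * P11 q))) p
      + g * h p * v1 p * pdx h p = 0)
    (eq5 : ∀ p ∈ Ω, pdt (fun q => h q / 2 * (v1 q * v2 q + P12 q)) p
      + pdx (fun q => h q / 2 * (v1 q ^ 2 * v2 q + 2 * v1 q * P12 q + v2 q * P11 q)) p
      + 1 / 2 * g * h p * v2 p * pdx h p = 0)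
    (eq6 : ∀ p ∈ Ω, pdt (fun q => h q / 2 * (v2 q ^ 2 + P22 q)) p
      + pdx (fun q => h q / 2 * (v1 q * v2 q ^ 2 + 2 * v2 q * P12 q + v1 q * P22 q)) p = 0)
    :
    ∀ p ∈ Ω,
      pdt (fun q => -(h q * Real.log ((P11 q * P22 q - P12 q ^ 2) / h q ^ 2))) p
        + pdx (fun q => -(h q * v1 q * Real.log ((P11 q * P22 q - P12 q ^ 2) / h q ^ 2))) p
        = 0 := by

  intro p hp
  have hmem := hΩ.mem_nhds hp
  have dh : DifferentiableAt ℝ h p := (hsm0.contDiffAt hmem).differentiableAt one_ne_zero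
  have du : DifferentiableAt ℝ v1 p := (hsm1.contDiffAt hmem).differentiableAt one_ne_zero
  have dv : DifferentiableAt ℝ v2 p := (hsm2.contDiffAt hmem).differentiableAt one_ne_zero
  have da : DifferentiableAt ℝ P11 p := (hsm3.contDiffAt hmem).differentiableAt one_ne_zero
  have db : DifferentiableAt ℝ P12 p := (hsm4.contDiffAt hmem).differentiableAt one_ne_zero
  have dc : DifferentiableAt ℝ P22 p := (hsm5.contDiffAt hmem).differentiableAt one_ne_zero
  have hhp : h p ≠ 0 := ne_of_gt (hpos p hp)
  have hh2 : h p ^ 2 ≠ 0 := pow_ne_zero 2 hhp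
  have hDp : P11 p * P22 p - P12 p ^ 2 ≠ 0 := ne_of_gt (hdet p hp)
  have hG0 : (P11 p * P22 p - P12 p ^ 2) / h p ^ 2 ≠ 0 :=
    div_ne_zero hDp hh2
  have dG : DifferentiableAt ℝ (fun q => (P11 q * P22 q - P12 q ^ 2) / h q ^ 2) p := by
    have hrw : (fun q : ℝ × ℝ => (P11 q * P22 q - P12 q ^ 2) / h q ^ 2)
        = fun q => (P11 q * P22 q - P12 q ^ 2) * (h q ^ 2)⁻¹ := by
      ext q; rw [div_eq_mul_inv]
    rw [hrw]
    exact DifferentiableAt.mul (by fun_prop) (DifferentiableAt.inv (by fun_prop) hh2)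
  have dL : DifferentiableAt ℝ
      (fun q => Real.log ((P11 q * P22 q - P12 q ^ 2) / h q ^ 2)) p :=
    dG.log hG0
  have E1 := eq1 p hp
  have E2 := eq2 p hp
  have E3 := eq3 p hp
  have E4 := eq4 p hp
  have E5 := eq5 p hp
  have E6 := eq6 p hp
  simp only [pdt, pdx] at E1 E2 E3 E4 E5 E6 ⊢
  simp (disch := first | assumption | fun_prop) only
    [fdw_mul, fdw_add, fdw_sub, fdw_neg, fdw_const_mul, fdw_div_const, fdw_pow2,
     fdw_div, fdw_log] at E1
  simp (disch := first | assumption | fun_prop) only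
    [fdw_mul, fdw_add, fdw_sub, fdw_neg, fdw_const_mul, fdw_div_const, fdw_pow2,
     fdw_div, fdw_log] at E2
  simp (disch := first | assumption | fun_prop) only
    [fdw_mul, fdw_add, fdw_sub, fdw_neg, fdw_const_mul, fdw_div_const, fdw_pow2,
     fdw_div, fdw_log] at E3
  simp (disch := first | assumption | fun_prop) only
    [fdw_mul, fdw_add, fdw_sub, fdw_neg, fdw_const_mul, fdw_div_const, fdw_pow2,
     fdw_div, fdw_log] at E4
  simp (disch := first | assumption | fun_prop) only
    [fdw_mul, fdw_add, fdw_sub, fdw_neg, fdw_const_mul, fdw_div_const, fdw_pow2,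
     fdw_div, fdw_log] at E5
  simp (disch := first | assumption | fun_prop) only
    [fdw_mul, fdw_add, fdw_sub, fdw_neg, fdw_const_mul, fdw_div_const, fdw_pow2,
     fdw_div, fdw_log] at E6
  simp (disch := first | assumption | fun_prop) only
    [fdw_mul, fdw_add, fdw_sub, fdw_neg, fdw_const_mul, fdw_div_const, fdw_pow2,
     fdw_div, fdw_log]
  simp only [fderiv_fun_const, Pi.zero_apply, ContinuousLinearMap.zero_apply, zero_mul,
    add_zero, zero_add, mul_zero] at E4 E5 E6
  set ht := fderiv ℝ h p (1, 0) with hht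
  set hx := fderiv ℝ h p (0, 1) with hhx
  set ut := fderiv ℝ v1 p (1, 0) with hut
  set ux := fderiv ℝ v1 p (0, 1) with hux
  set vt := fderiv ℝ v2 p (1, 0) with hvt
  set vx := fderiv ℝ v2 p (0, 1) with hvx
  set At := fderiv ℝ P11 p (1, 0) with hAt
  set Ax := fderiv ℝ P11 p (0, 1) with hAx
  set Bt := fderiv ℝ P12 p (1, 0) with hBt
  set Bx := fderiv ℝ P12 p (0, 1) with hBx
  set Ct := fderiv ℝ P22 p (1, 0) with hCt
  set Cx := fderiv ℝ P22 p (0, 1) with hCx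
  set H := h p with hH
  set U := v1 p with hU
  set V := v2 p with hV
  set A := P11 p with hA
  set B := P12 p with hB
  set C := P22 p with hC
  set s := Real.log ((A * C - B ^ 2) / H ^ 2) with hs
  -- clean form of mass equation
  have e1 : ht + hx * U + H * ux = 0 := by linear_combination E1
  -- evolution of P11, P12, P22 along the flow
  have a11 : At + U * Ax + 2 * A * ux = 0 := by
    have key : H * (At + U * Ax + 2 * A * ux) = 0 := by
      linear_combination 2 * E4 - 2 * U * E2 + (U ^ 2 - A) * E1
    rcases mul_eq_zero.mp key with h' | h'
    · exact absurd h' hhp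
    · exact h'
  have a12 : Bt + U * Bx + B * ux + A * vx = 0 := by
    have key : H * (Bt + U * Bx + B * ux + A * vx) = 0 := by
      linear_combination 2 * E5 - U * E3 - V * E2 + (U * V - B) * E1
    rcases mul_eq_zero.mp key with h' | h'
    · exact absurd h' hhp
    · exact h'
  have a22 : Ct + U * Cx + 2 * B * vx = 0 := by
    have key : H * (Ct + U * Cx + 2 * B * vx) = 0 := by
      linear_combination 2 * E6 - 2 * V * E3 + (V ^ 2 - C) * E1
    rcases mul_eq_zero.mp key with h' | h'
    · exact absurd h' hhp
    · exact h'
  -- evolution of the determinant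
  have dD : (At * C + A * Ct - 2 * B * Bt) + U * (Ax * C + A * Cx - 2 * B * Bx)
      + 2 * (A * C - B ^ 2) * ux = 0 := by
    linear_combination C * a11 - 2 * B * a12 + A * a22
  have hD' : C * A - B ^ 2 ≠ 0 := by rw [mul_comm]; exact hDp
  field_simp
  linear_combination (-(s - 2) * (A * C - B ^ 2)) * e1 + (-H) * dD
end

section
/- (Eigenstructure of the SSW model in the x-direction.) Let g > 0 and let W = (h, v1, v2, P11, P12, P22) with h > 0, P11 > 0 and P11 P22 − P12^2 > 0. Define the conservative variable map U(W) = (h, h v1, h v2, (h/2)(v1² + P11), (h/2)(v1 v2 + P12), (h/2)(v2² + P22)), the flux F^x(W) = (h v1, h(v1² + P11), h(v1 v2 + P12), (h/2) v1 (v1² + 3 P11), (h/2)(v1² v2 + 2 v1 P12 + v2 P11), (h/2)(v1 v2² + 2 v2 P12 + v1 P22)), the vector B^x = (0, g h, 0, g h v1, (1/2) g h v2, 0), A = sqrt(g h + 3 P11), C = sqrt(P11), the matrix R_W whose rows are: row 1 = (h(A²−C²), 0, −h, 0, 0, h(A²−C²)); row 2 = (−A(A²−C²), 0, 0, 0, 0,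 A(A²−C²)); row 3 = (−2A P12, −C, 0, 0, C, 2A P12); row 4 = (2C²(A²−C²), 0, g h + P11, 0, 0, 2C²(A²−C²)); row 5 = (P12(A²+C²), C², P12, 0, C², P12(A²+C²)); row 6 = (4 P12², 2 P12, 0, 1, 2 P12, 4 P12²), and the diagonal matrix Λ = diag(v1 − A, v1 − C, v1, v1, v1 + C, v1 + A). Then the matrix identity (D_W F^x(W) + B^x e₁ᵀ) R_W = (D_W U(W)) R_W Λ holds, where D_W denotes the Jacobian with respect to W and e₁ = (1,0,0,0,0,0)ᵀ. In particular, the quasilinear coefficient matrix of the x-direction SSW system has the six real eigenvalues v1 ± sqrt(g h + 3 P11), v1 ± sqrt(P11), v1, v1, with the columns of R_W as right eigenvectors in primitive variables. -/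
open Matrix

set_option maxHeartbeats 2000000

/-- The conservative variables of the SSW model as a function of the primitive variables
`w = (h, v1, v2, P11, P12, P22)`. -/
noncomputable def sswU (w : Fin 6 → ℝ) : Fin 6 → ℝ :=
  ![w 0, w 0 * w 1, w 0 * w 2, w 0 / 2 * (w 1 ^ 2 + w 3),
    w 0 / 2 * (w 1 * w 2 + w 4), w 0 / 2 * (w 2 ^ 2 + w 5)]

/-- The `x`-direction conservative flux of the SSW model as a function of the primitive
variables `w = (h, v1, v2, P11, P12, P22)`. -/
noncomputable def sswFx (w : Fin 6 → ℝ) : Fin 6 → ℝ :=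
  ![w 0 * w 1, w 0 * (w 1 ^ 2 + w 3), w 0 * (w 1 * w 2 + w 4),
    w 0 / 2 * (w 1 * (w 1 ^ 2 + 3 * w 3)),
    w 0 / 2 * (w 1 ^ 2 * w 2 + 2 * w 1 * w 4 + w 2 * w 3),
    w 0 / 2 * (w 1 * w 2 ^ 2 + 2 * w 2 * w 4 + w 1 * w 5)]

/-- Jacobian matrix of a map `ℝ⁶ → ℝ⁶`. -/
noncomputable def jac6 (f : (Fin 6 → ℝ) → (Fin 6 → ℝ)) (w : Fin 6 → ℝ) :
    Matrix (Fin 6) (Fin 6) ℝ :=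
  Matrix.of fun i j => fderiv ℝ (fun x => f x i) w (Pi.single j 1)

noncomputable def pr6 (i : Fin 6) : (Fin 6 → ℝ) →L[ℝ] ℝ := ContinuousLinearMap.proj i

lemma hp6 (i : Fin 6) (w : Fin 6 → ℝ) : HasFDerivAt (fun x : Fin 6 → ℝ => x i) (pr6 i) w :=
  (pr6 i).hasFDerivAt



lemma HasFDerivAt.pow2 {E : Type*} [NormedAddCommGroup E] [NormedSpace ℝ E]
    {f : E → ℝ} {f' : E →L[ℝ] ℝ} {x : E} (h : HasFDerivAt f f' x) :
    HasFDerivAt (fun y => f y ^ 2) (f x • f' + f x • f') x := by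
  have e : (fun y => f y ^ 2) = fun y => f y * f y := by funext y; ring
  rw [e]; exact h.mul h

lemma six_val_five {α : Type*} (a b c d e f : α) : ![a,b,c,d,e,f] 5 = f := rfl

@[simp] lemma cons_val_five' {m : ℕ} {α : Type*} (x : α) (u : Fin (m + 5) → α) :
    Matrix.vecCons x u 5
      = Matrix.vecHead (Matrix.vecTail (Matrix.vecTail (Matrix.vecTail (Matrix.vecTail u)))) :=
  rfl

lemma jac_sswU (w : Fin 6 → ℝ) : jac6 sswU w = Matrix.of
    ![![1, 0, 0, 0, 0, 0],
      ![w 1, w 0, 0, 0, 0, 0],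
      ![w 2, 0, w 0, 0, 0, 0],
      ![(w 1 ^ 2 + w 3) / 2, w 0 * w 1, 0, w 0 / 2, 0, 0],
      ![(w 1 * w 2 + w 4) / 2, w 0 * w 2 / 2, w 0 * w 1 / 2, 0, w 0 / 2, 0],
      ![(w 2 ^ 2 + w 5) / 2, 0, w 0 * w 2, 0, 0, w 0 / 2]] := by
  ext i j
  fin_cases i
  · show fderiv ℝ (fun x : Fin 6 → ℝ => x 0) w (Pi.single j 1)
        = ![(1 : ℝ), 0, 0, 0, 0, 0] j
    rw [(hp6 0 w).fderiv]
    fin_cases j <;> simp [pr6, Pi.single_apply, six_val_five]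
  · show fderiv ℝ (fun x : Fin 6 → ℝ => x 0 * x 1) w (Pi.single j 1)
        = ![w 1, w 0, 0, 0, 0, 0] j
    erw [((hp6 0 w).mul (hp6 1 w)).fderiv]
    fin_cases j <;> simp [pr6, Pi.single_apply, six_val_five]
  · show fderiv ℝ (fun x : Fin 6 → ℝ => x 0 * x 2) w (Pi.single j 1)
        = ![w 2, 0, w 0, 0, 0, 0] j
    erw [((hp6 0 w).mul (hp6 2 w)).fderiv]
    fin_cases j <;> simp [pr6, Pi.single_apply, six_val_five]
  · show fderiv ℝ (fun x : Fin 6 → ℝ => x 0 * (2:ℝ)⁻¹ * (x 1 ^ 2 + x 3)) w (Pi.single j 1)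
        = ![(w 1 ^ 2 + w 3) / 2, w 0 * w 1, 0, w 0 / 2, 0, 0] j
    erw [(((hp6 0 w).mul_const (2:ℝ)⁻¹).mul (((hp6 1 w).pow2).add (hp6 3 w))).fderiv]
    fin_cases j <;> simp [pr6, Pi.single_apply, six_val_five] <;> ring
  · show fderiv ℝ (fun x : Fin 6 → ℝ => x 0 * (2:ℝ)⁻¹ * (x 1 * x 2 + x 4)) w (Pi.single j 1)
        = ![(w 1 * w 2 + w 4) / 2, w 0 * w 2 / 2, w 0 * w 1 / 2, 0, w 0 / 2, 0] j
    erw [(((hp6 0 w).mul_const (2:ℝ)⁻¹).mul (((hp6 1 w).mul (hp6 2 w)).add (hp6 4 w))).fderiv]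
    fin_cases j <;> simp [pr6, Pi.single_apply, six_val_five] <;> ring
  · show fderiv ℝ (fun x : Fin 6 → ℝ => x 0 * (2:ℝ)⁻¹ * (x 2 ^ 2 + x 5)) w (Pi.single j 1)
        = ![(w 2 ^ 2 + w 5) / 2, 0, w 0 * w 2, 0, 0, w 0 / 2] j
    erw [(((hp6 0 w).mul_const (2:ℝ)⁻¹).mul (((hp6 2 w).pow2).add (hp6 5 w))).fderiv]
    fin_cases j <;> simp [pr6, Pi.single_apply, six_val_five] <;> ring

lemma jac_sswFx (w : Fin 6 → ℝ) : jac6 sswFx w = Matrix.of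
    ![![w 1, w 0, 0, 0, 0, 0],
      ![w 1 ^ 2 + w 3, 2 * w 0 * w 1, 0, w 0, 0, 0],
      ![w 1 * w 2 + w 4, w 0 * w 2, w 0 * w 1, 0, w 0, 0],
      ![w 1 * (w 1 ^ 2 + 3 * w 3) / 2, w 0 / 2 * (3 * w 1 ^ 2 + 3 * w 3), 0,
        3 * w 0 * w 1 / 2, 0, 0],
      ![(w 1 ^ 2 * w 2 + 2 * w 1 * w 4 + w 2 * w 3) / 2, w 0 * (w 1 * w 2 + w 4),
        w 0 / 2 * (w 1 ^ 2 + w 3), w 0 * w 2 / 2, w 0 * w 1, 0],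
      ![(w 1 * w 2 ^ 2 + 2 * w 2 * w 4 + w 1 * w 5) / 2, w 0 / 2 * (w 2 ^ 2 + w 5),
        w 0 * (w 1 * w 2 + w 4), 0, w 0 * w 2, w 0 * w 1 / 2]] := by
  ext i j
  fin_cases i
  · show fderiv ℝ (fun x : Fin 6 → ℝ => x 0 * x 1) w (Pi.single j 1)
        = ![w 1, w 0, 0, 0, 0, 0] j
    erw [((hp6 0 w).mul (hp6 1 w)).fderiv]
    fin_cases j <;> simp [pr6, Pi.single_apply, six_val_five]
  · show fderiv ℝ (fun x : Fin 6 → ℝ => x 0 * (x 1 ^ 2 + x 3)) w (Pi.single j 1)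
        = ![w 1 ^ 2 + w 3, 2 * w 0 * w 1, 0, w 0, 0, 0] j
    erw [((hp6 0 w).mul (((hp6 1 w).pow2).add (hp6 3 w))).fderiv]
    fin_cases j <;> simp [pr6, Pi.single_apply, six_val_five] <;> ring
  · show fderiv ℝ (fun x : Fin 6 → ℝ => x 0 * (x 1 * x 2 + x 4)) w (Pi.single j 1)
        = ![w 1 * w 2 + w 4, w 0 * w 2, w 0 * w 1, 0, w 0, 0] j
    erw [((hp6 0 w).mul (((hp6 1 w).mul (hp6 2 w)).add (hp6 4 w))).fderiv]
    fin_cases j <;> simp [pr6, Pi.single_apply, six_val_five] <;> ring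
  · show fderiv ℝ (fun x : Fin 6 → ℝ => x 0 * (2:ℝ)⁻¹ * (x 1 * (x 1 ^ 2 + 3 * x 3))) w (Pi.single j 1)
        = ![w 1 * (w 1 ^ 2 + 3 * w 3) / 2, w 0 / 2 * (3 * w 1 ^ 2 + 3 * w 3), 0,
            3 * w 0 * w 1 / 2, 0, 0] j
    erw [(((hp6 0 w).mul_const (2:ℝ)⁻¹).mul
      ((hp6 1 w).mul (((hp6 1 w).pow2).add ((hp6 3 w).const_mul 3)))).fderiv]
    fin_cases j <;> simp [pr6, Pi.single_apply, six_val_five] <;> ring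
  · show fderiv ℝ (fun x : Fin 6 → ℝ => x 0 * (2:ℝ)⁻¹ * (x 1 ^ 2 * x 2 + 2 * x 1 * x 4 + x 2 * x 3))
        w (Pi.single j 1)
        = ![(w 1 ^ 2 * w 2 + 2 * w 1 * w 4 + w 2 * w 3) / 2, w 0 * (w 1 * w 2 + w 4),
            w 0 / 2 * (w 1 ^ 2 + w 3), w 0 * w 2 / 2, w 0 * w 1, 0] j
    erw [(((hp6 0 w).mul_const (2:ℝ)⁻¹).mul
      (((((hp6 1 w).pow2).mul (hp6 2 w)).add
        (((hp6 1 w).const_mul 2).mul (hp6 4 w))).add ((hp6 2 w).mul (hp6 3 w)))).fderiv]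
    fin_cases j <;> simp [pr6, Pi.single_apply, six_val_five] <;> ring
  · show fderiv ℝ (fun x : Fin 6 → ℝ => x 0 * (2:ℝ)⁻¹ * (x 1 * x 2 ^ 2 + 2 * x 2 * x 4 + x 1 * x 5))
        w (Pi.single j 1)
        = ![(w 1 * w 2 ^ 2 + 2 * w 2 * w 4 + w 1 * w 5) / 2, w 0 / 2 * (w 2 ^ 2 + w 5),
            w 0 * (w 1 * w 2 + w 4), 0, w 0 * w 2, w 0 * w 1 / 2] j
    erw [(((hp6 0 w).mul_const (2:ℝ)⁻¹).mul
      ((((hp6 1 w).mul ((hp6 2 w).pow2)).add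
        (((hp6 2 w).const_mul 2).mul (hp6 4 w))).add ((hp6 1 w).mul (hp6 5 w)))).fderiv]
    fin_cases j <;> simp [pr6, Pi.single_apply, six_val_five] <;> ring

/-- Eigenstructure of the SSW model in the `x`-direction: the quasilinear coefficient
matrix `D_W F^x + B^x e₁ᵀ` of the primitive-variable form satisfies
`(D_W F^x + B^x e₁ᵀ) R_W = (D_W U) R_W Λ` with
`Λ = diag(v1 − A, v1 − C, v1, v1, v1 + C, v1 + A)`,
`A = √(g h + 3 P11)`, `C = √P11`. -/
theorem ssw_eigenstructure_x
    (g h v1 v2 P11 P12 P22 A C : ℝ)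
    (hg : 0 < g) (hh : 0 < h) (hP11 : 0 < P11) (hD : 0 < P11 * P22 - P12 ^ 2)
    (hA : A = Real.sqrt (g * h + 3 * P11)) (hC : C = Real.sqrt P11)
    (w : Fin 6 → ℝ) (hw : w = ![h, v1, v2, P11, P12, P22])
    (Bmat : Matrix (Fin 6) (Fin 6) ℝ)
    (hB : Bmat = Matrix.of fun i j =>
      if j = 0 then (![0, g * h, 0, g * h * v1, 1 / 2 * g * h * v2, 0] : Fin 6 → ℝ) i else 0)
    (RW : Matrix (Fin 6) (Fin 6) ℝ)
    (hRW : RW = Matrix.of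
      ![![h * (A ^ 2 - C ^ 2), 0, -h, 0, 0, h * (A ^ 2 - C ^ 2)],
        ![-(A * (A ^ 2 - C ^ 2)), 0, 0, 0, 0, A * (A ^ 2 - C ^ 2)],
        ![-(2 * A * P12), -C, 0, 0, C, 2 * A * P12],
        ![2 * C ^ 2 * (A ^ 2 - C ^ 2), 0, g * h + P11, 0, 0, 2 * C ^ 2 * (A ^ 2 - C ^ 2)],
        ![P12 * (A ^ 2 + C ^ 2), C ^ 2, P12, 0, C ^ 2, P12 * (A ^ 2 + C ^ 2)],
        ![4 * P12 ^ 2, 2 * P12, 0, 1, 2 * P12, 4 * P12 ^ 2]]) :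
    (jac6 sswFx w + Bmat) * RW
      = jac6 sswU w * RW * Matrix.diagonal ![v1 - A, v1 - C, v1, v1, v1 + C, v1 + A] := by
  have hA2 : A ^ 2 = g * h + 3 * P11 := by
    rw [hA]; exact Real.sq_sqrt (by positivity)
  have hC2 : C ^ 2 = P11 := by
    rw [hC]; exact Real.sq_sqrt hP11.le
  have hB' : Bmat = Matrix.of
      ![![0, 0, 0, 0, 0, 0], ![g * h, 0, 0, 0, 0, 0], ![0, 0, 0, 0, 0, 0],
        ![g * h * v1, 0, 0, 0, 0, 0], ![1 / 2 * g * h * v2, 0, 0, 0, 0, 0],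
        ![0, 0, 0, 0, 0, 0]] := by
    subst hB; ext i j; fin_cases i <;> fin_cases j <;> rfl
  subst hw hRW
  rw [hB', jac_sswU, jac_sswFx]
  ext i j
  rw [Matrix.mul_diagonal]
  fin_cases i <;> fin_cases j
  · simp [Matrix.add_apply, Matrix.mul_apply, Fin.sum_univ_six, six_val_five, cons_val_five']
    try ring
  · simp [Matrix.add_apply, Matrix.mul_apply, Fin.sum_univ_six, six_val_five, cons_val_five']
    try ring
  · simp [Matrix.add_apply, Matrix.mul_apply, Fin.sum_univ_six, six_val_five, cons_val_five']
    try ring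
  · simp [Matrix.add_apply, Matrix.mul_apply, Fin.sum_univ_six, six_val_five, cons_val_five']
    try ring
  · simp [Matrix.add_apply, Matrix.mul_apply, Fin.sum_univ_six, six_val_five, cons_val_five']
    try ring
  · simp [Matrix.add_apply, Matrix.mul_apply, Fin.sum_univ_six, six_val_five, cons_val_five']
    try ring
  · simp [Matrix.add_apply, Matrix.mul_apply, Fin.sum_univ_six, six_val_five, cons_val_five']
    try ring
    try linear_combination (3 * h * C ^ 2 - h * A ^ 2 - 2 * h * P11) * hA2 + (-2 * h * C ^ 2 + 6 * h * P11 + 2 * g * h ^ 2) * hC2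
  · simp [Matrix.add_apply, Matrix.mul_apply, Fin.sum_univ_six, six_val_five, cons_val_five']
    try ring
  · simp [Matrix.add_apply, Matrix.mul_apply, Fin.sum_univ_six, six_val_five, cons_val_five']
    try ring
  · simp [Matrix.add_apply, Matrix.mul_apply, Fin.sum_univ_six, six_val_five, cons_val_five']
    try ring
  · simp [Matrix.add_apply, Matrix.mul_apply, Fin.sum_univ_six, six_val_five, cons_val_five']
    try ring
  · simp [Matrix.add_apply, Matrix.mul_apply, Fin.sum_univ_six, six_val_five, cons_val_five']
    try ring
    try linear_combination (3 * h * C ^ 2 - h * A ^ 2 - 2 * h * P11) * hA2 + (-2 * h * C ^ 2 + 6 * h * P11 + 2 * g * h ^ 2) * hC2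
  · simp [Matrix.add_apply, Matrix.mul_apply, Fin.sum_univ_six, six_val_five, cons_val_five']
    try ring
  · simp [Matrix.add_apply, Matrix.mul_apply, Fin.sum_univ_six, six_val_five, cons_val_five']
    try ring
  · simp [Matrix.add_apply, Matrix.mul_apply, Fin.sum_univ_six, six_val_five, cons_val_five']
    try ring
  · simp [Matrix.add_apply, Matrix.mul_apply, Fin.sum_univ_six, six_val_five, cons_val_five']
    try ring
  · simp [Matrix.add_apply, Matrix.mul_apply, Fin.sum_univ_six, six_val_five, cons_val_five']
    try ring
  · simp [Matrix.add_apply, Matrix.mul_apply, Fin.sum_univ_six, six_val_five, cons_val_five']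
    try ring
  · simp [Matrix.add_apply, Matrix.mul_apply, Fin.sum_univ_six, six_val_five, cons_val_five']
    try ring
    try linear_combination (h * A * C ^ 2 - h * P11 * A + 3 * h * v1 * C ^ 2 - h * v1 * A ^ 2 - 2 * h * v1 * P11) * hA2 + (-h * A * C ^ 2 + 3 * h * P11 * A - 2 * h * v1 * C ^ 2 + 6 * h * v1 * P11 + g * h ^ 2 * A + 2 * g * h ^ 2 * v1) * hC2
  · simp [Matrix.add_apply, Matrix.mul_apply, Fin.sum_univ_six, six_val_five, cons_val_five']
    try ring
  · simp [Matrix.add_apply, Matrix.mul_apply, Fin.sum_univ_six, six_val_five, cons_val_five']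
    try ring
  · simp [Matrix.add_apply, Matrix.mul_apply, Fin.sum_univ_six, six_val_five, cons_val_five']
    try ring
  · simp [Matrix.add_apply, Matrix.mul_apply, Fin.sum_univ_six, six_val_five, cons_val_five']
    try ring
  · simp [Matrix.add_apply, Matrix.mul_apply, Fin.sum_univ_six, six_val_five, cons_val_five']
    try ring
    try linear_combination (-h * A * C ^ 2 + h * P11 * A + 3 * h * v1 * C ^ 2 - h * v1 * A ^ 2 - 2 * h * v1 * P11) * hA2 + (h * A * C ^ 2 - 3 * h * P11 * A - 2 * h * v1 * C ^ 2 + 6 * h * v1 * P11 - g * h ^ 2 * A + 2 * g * h ^ 2 * v1) * hC2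
  · simp [Matrix.add_apply, Matrix.mul_apply, Fin.sum_univ_six, six_val_five, cons_val_five']
    try ring
    try linear_combination ((3/2 : ℝ) * h * v2 * C ^ 2 - (1/2 : ℝ) * h * v2 * A ^ 2 - h * v2 * P11) * hA2 + (h * P12 * A - h * v2 * C ^ 2 + 3 * h * v2 * P11 + g * h ^ 2 * v2) * hC2
  · simp [Matrix.add_apply, Matrix.mul_apply, Fin.sum_univ_six, six_val_five, cons_val_five']
    try ring
    try linear_combination ((1/2 : ℝ) * h * C) * hC2
  · simp [Matrix.add_apply, Matrix.mul_apply, Fin.sum_univ_six, six_val_five, cons_val_five']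
    try ring
  · simp [Matrix.add_apply, Matrix.mul_apply, Fin.sum_univ_six, six_val_five, cons_val_five']
    try ring
  · simp [Matrix.add_apply, Matrix.mul_apply, Fin.sum_univ_six, six_val_five, cons_val_five']
    try ring
    try linear_combination (-(1/2 : ℝ) * h * C) * hC2
  · simp [Matrix.add_apply, Matrix.mul_apply, Fin.sum_univ_six, six_val_five, cons_val_five']
    try ring
    try linear_combination ((3/2 : ℝ) * h * v2 * C ^ 2 - (1/2 : ℝ) * h * v2 * A ^ 2 - h * v2 * P11) * hA2 + (-h * P12 * A - h * v2 * C ^ 2 + 3 * h * v2 * P11 + g * h ^ 2 * v2) * hC2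
  · simp [Matrix.add_apply, Matrix.mul_apply, Fin.sum_univ_six, six_val_five, cons_val_five']
    try ring
  · simp [Matrix.add_apply, Matrix.mul_apply, Fin.sum_univ_six, six_val_five, cons_val_five']
    try ring
  · simp [Matrix.add_apply, Matrix.mul_apply, Fin.sum_univ_six, six_val_five, cons_val_five']
    try ring
  · simp [Matrix.add_apply, Matrix.mul_apply, Fin.sum_univ_six, six_val_five, cons_val_five']
    try ring
  · simp [Matrix.add_apply, Matrix.mul_apply, Fin.sum_univ_six, six_val_five, cons_val_five']
    try ring
  · simp [Matrix.add_apply, Matrix.mul_apply, Fin.sum_univ_six, six_val_five, cons_val_five']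
    try ring
end
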